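/- For every n ∈ ℕ one has Σ_{m=0}^∞ q^{m(n+1)} ∏_{i=1}^∞ (1−q^{m+i}) = ∏_{i=1}^{n} (1−q^{i}), where for n = 0 the right-hand side is the empty product 1 (so in particular the series Σ_{m=0}^∞ q^m ∏_{i=1}^∞ (1−q^{m+i}) sums to 1). -/

import Mathlib

/-!
Put `P m = ∏_{i ≥ 1} (1 - q^{m+i})`. Only two facts about `P` are needed: the recurrence
`P m = (1 - q^{m+1}) P (m+1)`, and `P m → 1` (dominated convergence). For `n = 0` the recurrence
makes the partial sums telescope, `∑_{m ≤ M} q^m P m = P M → 1`. For the induction step, write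
`S n` for the left-hand side; since `(1 - q^m) P m = P (m-1)` for `m ≥ 1`, the difference
`S n - S (n+1) = ∑ q^{m(n+1)} (1 - q^m) P m` is the reindexed series `q^{n+1} S n`, so
`S (n+1) = (1 - q^{n+1}) S n`.
-/

open Filter Topology Asymptotics Finset

lemma sum_range_succ_pow_mul_eq {R : Type*} [CommRing R] {q : R} {P : ℕ → R}
    (hrec : ∀ m, P m = (1 - q ^ (m + 1)) * P (m + 1)) (M : ℕ) :
    ∑ m ∈ range (M + 1), q ^ m * P m = P M := by
  induction M with
  | zero => simp
  | succ M ih =>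
    rw [sum_range_succ, ih, hrec M]
    ring

variable {R : Type*} [NormedCommRing R] [NormOneClass R] {q : R}

/-- The q-Pochhammer symbol `(q^{m+1}; q)_∞`. -/
noncomputable def qPochhammerTail (q : R) (m : ℕ) : R := ∏' i : ℕ, (1 - q ^ (m + i + 1))

lemma norm_pow_add_succ_le (hq : ‖q‖ < 1) (m i : ℕ) : ‖q ^ (m + i + 1)‖ ≤ ‖q‖ ^ i :=
  (norm_pow_le q _).trans (pow_le_pow_of_le_one (norm_nonneg q) hq.le (by omega))

variable [CompleteSpace R]

lemma multipliable_one_sub_pow_add_succ (hq : ‖q‖ < 1) (m : ℕ) :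
    Multipliable fun i : ℕ => 1 - q ^ (m + i + 1) := by
  simp only [sub_eq_add_neg]
  refine multipliable_one_add_of_summable <|
    (summable_geometric_of_lt_one (norm_nonneg q) hq).of_nonneg_of_le (fun _ => norm_nonneg _)
      fun i => ?_
  simpa only [norm_neg] using norm_pow_add_succ_le hq m i

lemma qPochhammerTail_eq_mul_succ (hq : ‖q‖ < 1) (m : ℕ) :
    qPochhammerTail q m = (1 - q ^ (m + 1)) * qPochhammerTail q (m + 1) := by
  have shift (i : ℕ) : m + (i + 1) + 1 = m + 1 + i + 1 := by omega
  rw [qPochhammerTail, tprod_eq_zero_mul']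
  · simp only [shift, add_zero, qPochhammerTail]
  · simpa only [shift] using multipliable_one_sub_pow_add_succ hq (m + 1)

lemma tendsto_qPochhammerTail (hq : ‖q‖ < 1) :
    Tendsto (qPochhammerTail q) atTop (𝓝 1) := by
  have h := tendsto_tprod_one_add_of_dominated_convergence (𝓕 := atTop)
    (f := fun m i => -q ^ (m + i + 1)) (g := fun _ => 0)
    (summable_geometric_of_lt_one (norm_nonneg q) hq)
    (fun i => by
      simpa [add_assoc] using ((tendsto_pow_atTop_nhds_zero_of_norm_lt_one hq).comp
        ((tendsto_add_atTop_nat (i + 1)))).neg)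
    (Eventually.of_forall fun m i => by simpa only [norm_neg] using norm_pow_add_succ_le hq m i)
  simp only [add_zero, tprod_one] at h
  show Tendsto (fun m => ∏' i : ℕ, (1 - q ^ (m + i + 1))) atTop (𝓝 1)
  simpa only [sub_eq_add_neg] using h

section Recurrence

variable {P : ℕ → R}

lemma summable_pow_mul_of_tendsto (hq : ‖q‖ < 1) {a : R} (hP : Tendsto P atTop (𝓝 a))
    (n : ℕ) : Summable fun m : ℕ => q ^ (m * (n + 1)) * P m := by
  have hpow : (fun m : ℕ => q ^ (m * (n + 1))) =O[atTop] fun m => ‖q‖ ^ m :=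
    IsBigO.of_norm_le fun m => (norm_pow_le q _).trans
      (pow_le_pow_of_le_one (norm_nonneg q) hq.le (Nat.le_mul_of_pos_right m n.succ_pos))
  refine summable_of_isBigO_nat (summable_geometric_of_lt_one (norm_nonneg q) hq) ?_
  simpa only [mul_one] using hpow.mul (hP.isBigO_one ℝ)

lemma tsum_pow_mul_eq_one (hq : ‖q‖ < 1) (hrec : ∀ m, P m = (1 - q ^ (m + 1)) * P (m + 1))
    (hP : Tendsto P atTop (𝓝 1)) : ∑' m, q ^ m * P m = 1 := by
  have hsum : Summable fun m => q ^ m * P m := by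
    simpa using summable_pow_mul_of_tendsto hq hP 0
  refine tendsto_nhds_unique hsum.hasSum.tendsto_sum_nat ?_
  rw [← tendsto_add_atTop_iff_nat 1]
  simpa only [sum_range_succ_pow_mul_eq hrec] using hP

lemma tsum_pow_mul_succ_eq (hq : ‖q‖ < 1) (hrec : ∀ m, P m = (1 - q ^ (m + 1)) * P (m + 1))
    {a : R} (hP : Tendsto P atTop (𝓝 a)) (n : ℕ) :
    ∑' m, q ^ (m * (n + 2)) * P m = (1 - q ^ (n + 1)) * ∑' m, q ^ (m * (n + 1)) * P m := by
  have hS := summable_pow_mul_of_tendsto hq hP n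
  have hS' := summable_pow_mul_of_tendsto hq hP (n + 1)
  have shifted (m : ℕ) :
      q ^ ((m + 1) * (n + 1)) * P (m + 1) - q ^ ((m + 1) * (n + 2)) * P (m + 1)
        = q ^ (n + 1) * (q ^ (m * (n + 1)) * P m) := by
    rw [hrec m]
    ring
  have hdiff : ∑' m, (q ^ (m * (n + 1)) * P m - q ^ (m * (n + 2)) * P m)
      = q ^ (n + 1) * ∑' m, q ^ (m * (n + 1)) * P m := by
    rw [(hS.sub hS').tsum_eq_zero_add]
    simp only [shifted, hS.tsum_mul_left]
    simp
  rw [hS.tsum_sub hS'] at hdiff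
  linear_combination -hdiff

theorem tsum_pow_mul_eq_prod (hq : ‖q‖ < 1) (hrec : ∀ m, P m = (1 - q ^ (m + 1)) * P (m + 1))
    (hP : Tendsto P atTop (𝓝 1)) (n : ℕ) :
    ∑' m, q ^ (m * (n + 1)) * P m = ∏ i ∈ range n, (1 - q ^ (i + 1)) := by
  induction n with
  | zero => simpa using tsum_pow_mul_eq_one hq hrec hP
  | succ n ih => rw [tsum_pow_mul_succ_eq hq hrec hP, ih, prod_range_succ, mul_comm]

end Recurrence

theorem stmt2 (q : ℝ) (hq0 : 0 < q) (hq1 : q < 1) (n : ℕ) :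
    ∑' m : ℕ, q ^ (m * (n + 1)) * (∏' i : ℕ, (1 - q ^ (m + i + 1)))
      = ∏ i ∈ Finset.range n, (1 - q ^ (i + 1)) := by
  have hq : ‖q‖ < 1 := by rw [Real.norm_eq_abs, abs_lt]; constructor <;> linarith
  exact tsum_pow_mul_eq_prod hq (qPochhammerTail_eq_mul_succ hq) (tendsto_qPochhammerTail hq) n
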